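/- arXiv:1911.03194 — 4 statements merged into one kernel-verified Lean document; each statement's English description precedes it below -/
import Mathlib

section
/- Let V be an n-dimensional vector space over a field F, let Λ = (λ_{i,j}) be an n×n matrix with all entries nonzero, and fix a basis 𝒱 of V. Suppose φ : V → V is a map such that for every pair v, w ∈ V there exists a linear endomorphism φ_{v,w} of V whose matrix with respect to 𝒱 has the form (λ_{i,j} a_{i,j}) for some symmetric matrix (a_{i,j}), and which satisfies φ(v) = φ_{v,w}(v) and φ(w) = φ_{v,w}(w). Then φ is linear. -/
/-!
For a linear map `T` whose matrix is `Λ ⊙ A` with `A` symmetric, the `(i, j)` entry equals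
`Λ i j / Λ j i` times the `(j, i)` entry, so the `i`-th coordinate of `T x` is determined by `x`
and `T (b i)`. Applying this to the local implementation of `φ` at the pair `x, b i` shows that
`φ x` is the product of the single matrix `(Λ i j / Λ j i * (φ (b i))_j)` with the coordinates
of `x`.
-/

open Matrix

theorem Matrix.IsSymm.hadamard_apply_eq_div_mul {K ι : Type*} [Field K] {Λ A : Matrix ι ι K}
    (hA : A.IsSymm) {i j : ι} (hΛ : Λ j i ≠ 0) :
    (Λ ⊙ A) i j = Λ i j / Λ j i * (Λ ⊙ A) j i := by
  rw [hadamard_apply, hadamard_apply, hA.apply i j]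
  field_simp

theorem LinearMap.repr_apply_eq_sum_of_toMatrix_eq_hadamard {K V ι : Type*} [Field K]
    [AddCommGroup V] [Module K V] [Fintype ι] [DecidableEq ι] (b : Module.Basis ι K V)
    {Λ A : Matrix ι ι K} (hA : A.IsSymm) {T : V →ₗ[K] V} (hT : toMatrix b b T = Λ ⊙ A)
    (x : V) (i : ι) (hΛ : ∀ j, Λ j i ≠ 0) :
    b.repr (T x) i = ∑ j, Λ i j / Λ j i * b.repr (T (b i)) j * b.repr x j := by
  rw [← toMatrix_mulVec_repr b b, mulVec, dotProduct]
  refine Finset.sum_congr rfl fun j _ => ?_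
  rw [← toMatrix_apply b b T j i, hT, hA.hadamard_apply_eq_div_mul (hΛ j)]

/-- A 2-local linear map on a finite dimensional vector space, each of whose
local implementations is Λ-symmetric with respect to a fixed basis (Λ having nonzero
entries), is linear. -/
theorem two_local_linear_map_is_linear
    {F V : Type*} [Field F] [AddCommGroup V] [Module F V] {n : ℕ}
    (b : Module.Basis (Fin n) F V)
    (Λ : Matrix (Fin n) (Fin n) F) (hΛ : ∀ i j, Λ i j ≠ 0)
    (φ : V → V)
    (h : ∀ v w : V, ∃ T : V →ₗ[F] V,
      (∃ A : Matrix (Fin n) (Fin n) F, A.IsSymm ∧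
        LinearMap.toMatrix b b T = Matrix.of fun i j => Λ i j * A i j) ∧
      T v = φ v ∧ T w = φ w) :
    IsLinearMap F φ := by
  set B : Matrix (Fin n) (Fin n) F := of fun i j => Λ i j / Λ j i * b.repr (φ (b i)) j
  have hφ : φ = toLin b b B := by
    funext x
    refine b.repr.injective (Finsupp.ext fun i => ?_)
    obtain ⟨T, ⟨A, hA, hT⟩, hTx, hTi⟩ := h x (b i)
    rw [repr_toLin, ← hTx,
      LinearMap.repr_apply_eq_sum_of_toMatrix_eq_hadamard b hA hT x i fun j => hΛ j i, hTi]
    rfl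
  exact hφ ▸ (toLin b b B).isLinear
end

section
/- Let A be a finite dimensional formally real Jordan algebra over ℝ, with associative positive definite symmetric bilinear form B and all derivations inner. Suppose Δ : A → A is a map such that for every x, y ∈ A there exists a derivation D_{x,y} of A with Δ(x) = D_{x,y}(x) and Δ(y) = D_{x,y}(y) (a 2-local derivation). Then Δ is linear, and hence a derivation. -/
/-!
Every derivation is a sum of commutators `[L a, L b]`, and multiplication operators are
self-adjoint for the associative form `B`, so every derivation is `B`-skew. A 2-local derivation
`Δ` agrees with a derivation on any pair `u, v`, hence `B (Δ u) v = -B u (Δ v)` for all `u, v`.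
Since `B` is positive definite, `Δ u` is then determined by the linear functional
`v ↦ -B u (Δ v)`, which forces `Δ` to be linear. Finally `Δ (x * x) = D (x * x)` for the
derivation `D` agreeing with `Δ` at `x` and `x * x`, and the Leibniz rule on squares polarizes.
-/

open Finset

theorem LinearMap.SeparatingLeft.isLinearMap_of_skew {R M : Type*} [CommRing R] [AddCommGroup M]
    [Module R M] {B : LinearMap.BilinForm R M} (hB : B.SeparatingLeft) {f : M → M}
    (hf : ∀ u v, B (f u) v = -B u (f v)) : IsLinearMap R f := by
  have ext_of_forall_eq : ∀ x y, (∀ v, B x v = B y v) → x = y := fun x y h =>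
    sub_eq_zero.1 <| hB _ fun v => by rw [map_sub, LinearMap.sub_apply, h, sub_self]
  constructor
  · intro x y
    refine ext_of_forall_eq _ _ fun v => ?_
    simp only [hf, map_add, LinearMap.add_apply]
    ring
  · intro c x
    refine ext_of_forall_eq _ _ fun v => ?_
    simp only [hf, map_smul, LinearMap.smul_apply, smul_eq_mul]
    ring

section AssociativeForm

variable {R A : Type*} [CommRing R] [NonUnitalNonAssocCommRing A] [Module R A]
  {B : LinearMap.BilinForm R A}

theorem LinearMap.BilinForm.apply_mul_left_of_assoc
    (hassoc : ∀ x y z, B (x * y) z = B x (y * z)) (a x y : A) :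
    B (a * x) y = B x (a * y) := by
  rw [mul_comm, hassoc]

theorem LinearMap.BilinForm.apply_commutator_mul_left_of_assoc
    (hassoc : ∀ x y z, B (x * y) z = B x (y * z)) (a b x y : A) :
    B (a * (b * x) - b * (a * x)) y = -B x (a * (b * y) - b * (a * y)) := by
  simp only [map_sub, LinearMap.sub_apply, B.apply_mul_left_of_assoc hassoc]
  ring

theorem LinearMap.BilinForm.apply_sum_commutator_mul_left_of_assoc
    (hassoc : ∀ x y z, B (x * y) z = B x (y * z)) {ι : Type*} [Fintype ι] (a b : ι → A)
    {D : A → A} (hD : ∀ x, D x = ∑ i, (a i * (b i * x) - b i * (a i * x))) (x y : A) :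
    B (D x) y = -B x (D y) := by
  simp only [hD, map_sum, LinearMap.sum_apply, ← Finset.sum_neg_distrib,
    B.apply_commutator_mul_left_of_assoc hassoc]

end AssociativeForm

theorem AddMonoidHom.map_mul_of_map_mul_self {A : Type*} [NonUnitalNonAssocCommRing A]
    [IsAddTorsionFree A] (f : A →+ A) (hf : ∀ x, f (x * x) = f x * x + x * f x) (x y : A) :
    f (x * y) = f x * y + x * f y := by
  have h := hf (x + y)
  simp only [add_mul, mul_add, map_add, hf, mul_comm y x, mul_comm y (f x), mul_comm (f y) x] at h
  refine nsmul_right_injective two_ne_zero ?_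
  simp only [two_nsmul]
  grind

theorem two_local_derivation_is_derivation_general
    {A : Type*} [NonUnitalNonAssocCommRing A]
    [Module ℝ A]
    (B : LinearMap.BilinForm ℝ A)
    (hpos : ∀ x : A, x ≠ 0 → 0 < B x x)
    (hassoc : ∀ x y z : A, B (x * y) z = B x (y * z))
    (hInner : ∀ D : A →ₗ[ℝ] A, (∀ x y : A, D (x * y) = D x * y + x * D y) →
      ∃ (k : ℕ) (a b : Fin k → A),
        ∀ x : A, D x = ∑ i, (a i * (b i * x) - b i * (a i * x)))
    (Δ : A → A)
    (h2loc : ∀ x y : A, ∃ D : A →ₗ[ℝ] A,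
      (∀ u v : A, D (u * v) = D u * v + u * D v) ∧ D x = Δ x ∧ D y = Δ y) :
    IsLinearMap ℝ Δ ∧ ∀ x y : A, Δ (x * y) = Δ x * y + x * Δ y := by
  have hskew : ∀ u v, B (Δ u) v = -B u (Δ v) := by
    intro u v
    obtain ⟨D, hD, hu, hv⟩ := h2loc u v
    obtain ⟨k, a, b, hab⟩ := hInner D hD
    rw [← hu, ← hv]
    exact B.apply_sum_commutator_mul_left_of_assoc hassoc a b hab u v
  have hsep : B.SeparatingLeft :=
    LinearMap.BilinForm.separatingLeft_of_anisotropic (QuadraticMap.PosDef.anisotropic hpos)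
  have hlin : IsLinearMap ℝ Δ := hsep.isLinearMap_of_skew hskew
  have hsq : ∀ x, Δ (x * x) = Δ x * x + x * Δ x := by
    intro x
    obtain ⟨D, hD, hx, hxx⟩ := h2loc x (x * x)
    rw [← hxx, hD, hx]
  have : IsAddTorsionFree A := .of_isTorsionFree ℝ A
  exact ⟨hlin, (hlin.mk' Δ).toAddMonoidHom.map_mul_of_map_mul_self hsq⟩

/-- Every 2-local derivation on a finite dimensional formally real Jordan
algebra over ℝ (with associative positive definite symmetric bilinear form, all derivations
inner) is linear, hence a derivation. -/
theorem two_local_derivation_is_derivation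
    {A : Type*} [NonUnitalNonAssocCommRing A] [IsCommJordan A]
    [Module ℝ A] [IsScalarTower ℝ A A] [SMulCommClass ℝ A A] [FiniteDimensional ℝ A]
    (hFR : ∀ (k : ℕ) (a : Fin k → A), ∑ i, a i * a i = 0 → ∀ i, a i = 0)
    (B : LinearMap.BilinForm ℝ A)
    (hsymm : ∀ x y : A, B x y = B y x)
    (hpos : ∀ x : A, x ≠ 0 → 0 < B x x)
    (hassoc : ∀ x y z : A, B (x * y) z = B x (y * z))
    (hInner : ∀ D : A →ₗ[ℝ] A, (∀ x y : A, D (x * y) = D x * y + x * D y) →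
      ∃ (k : ℕ) (a b : Fin k → A),
        ∀ x : A, D x = ∑ i, (a i * (b i * x) - b i * (a i * x)))
    (Δ : A → A)
    (h2loc : ∀ x y : A, ∃ D : A →ₗ[ℝ] A,
      (∀ u v : A, D (u * v) = D u * v + u * D v) ∧ D x = Δ x ∧ D y = Δ y) :
    IsLinearMap ℝ Δ ∧ ∀ x y : A, Δ (x * y) = Δ x * y + x * Δ y :=
  two_local_derivation_is_derivation_general B hpos hassoc hInner Δ h2loc
end

section
/- Let V be an n-dimensional vector space over a field F with fixed basis 𝒱, and let φ : V → V be a map such that for every v, w ∈ V there is a linear endomorphism whose matrix with respect to 𝒱 is skew-symmetric, agreeing with φ at v and w. Then φ is linear (and its matrix with respect to 𝒱 is skew-symmetric). -/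
/-!
A matrix with respect to `b` is skew-symmetric exactly when the endomorphism is skew-adjoint for
the form `B x y = ∑ i, (b.repr x) i * (b.repr y) i`. Skew-adjointness constrains only two vectors
at a time, so `φ` inherits it from its 2-local implementations. Then `B (φ v) w = -B v (φ w)` is
linear in `v`, and `B` is nondegenerate, so `φ` is linear.
-/

open Matrix

theorem Matrix.separatingLeft_one {ι R : Type*} [CommSemiring R] [Fintype ι] [DecidableEq ι] :
    (1 : Matrix ι ι R).SeparatingLeft :=
  separatingLeft_iff_forall_vecMul_eq_zero.2 fun v hv => by rwa [vecMul_one] at hv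

namespace LinearMap

variable {R M N : Type*} [CommRing R] [AddCommGroup M] [Module R M] [AddCommGroup N] [Module R N]

theorem isSkewAdjoint_of_forall_exists_isSkewAdjoint {B : M →ₗ[R] M →ₗ[R] N} {φ : M → M}
    (h : ∀ v w : M, ∃ T : M →ₗ[R] M, B.IsSkewAdjoint T ∧ T v = φ v ∧ T w = φ w) :
    B.IsSkewAdjoint φ := by
  intro v w
  obtain ⟨T, hT, hv, hw⟩ := h v w
  simpa only [hv, hw, Pi.neg_apply] using hT v w

theorem SeparatingLeft.isLinearMap_of_isSkewAdjoint {B : M →ₗ[R] M →ₗ[R] N}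
    (hB : B.SeparatingLeft) {φ : M → M} (hφ : B.IsSkewAdjoint φ) : IsLinearMap R φ := by
  have hinj : Function.Injective B := ker_eq_bot.1 (separatingLeft_iff_ker_eq_bot.1 hB)
  refine ⟨fun v v' => hinj (ext fun w => ?_), fun c v => hinj (ext fun w => ?_)⟩
  · rw [hφ, map_add, map_add, add_apply, add_apply, hφ, hφ]
  · rw [hφ, map_smul, map_smul, smul_apply, smul_apply, hφ]

theorem isSkewAdjoint_toLinearMap₂_one_iff {ι : Type*} [Fintype ι] [DecidableEq ι]
    (b : Module.Basis ι R M) (T : M →ₗ[R] M) :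
    (Matrix.toLinearMap₂ b b (1 : Matrix ι ι R)).IsSkewAdjoint T ↔
      (toMatrix b b T)ᵀ = -toMatrix b b T := by
  have h := isAdjointPair_toLinearMap₂ b b 1 1 (toMatrix b b T) (-toMatrix b b T)
  rw [map_neg, Matrix.toLin_toMatrix] at h
  rwa [Matrix.IsAdjointPair, Matrix.mul_one, Matrix.one_mul] at h

end LinearMap

/-- A 2-local linear map whose local implementations all have skew-symmetric
matrices with respect to a fixed basis is linear, and its matrix is skew-symmetric. -/
theorem two_local_skew_symmetric_is_linear
    {F V : Type*} [Field F] [AddCommGroup V] [Module F V] {n : ℕ}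
    (b : Module.Basis (Fin n) F V) (φ : V → V)
    (h : ∀ v w : V, ∃ T : V →ₗ[F] V,
      (LinearMap.toMatrix b b T)ᵀ = -(LinearMap.toMatrix b b T) ∧
      T v = φ v ∧ T w = φ w) :
    IsLinearMap F φ ∧ ∃ T : V →ₗ[F] V,
      (LinearMap.toMatrix b b T)ᵀ = -(LinearMap.toMatrix b b T) ∧ ∀ v : V, φ v = T v := by
  set B := Matrix.toLinearMap₂ b b (1 : Matrix (Fin n) (Fin n) F)
  have hB : B.SeparatingLeft := Matrix.separatingLeft_one.toLinearMap₂ b b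
  have hφ : B.IsSkewAdjoint φ := LinearMap.isSkewAdjoint_of_forall_exists_isSkewAdjoint fun v w =>
    let ⟨T, hT, hv, hw⟩ := h v w
    ⟨T, (LinearMap.isSkewAdjoint_toLinearMap₂_one_iff b T).2 hT, hv, hw⟩
  have hlin := hB.isLinearMap_of_isSkewAdjoint hφ
  exact ⟨hlin, hlin.mk' φ, (LinearMap.isSkewAdjoint_toLinearMap₂_one_iff b _).1 hφ, fun _ => rfl⟩
end

section
/- Let V be an n-dimensional vector space over a field F with fixed basis 𝒱, and let φ : V → V be a map such that for every v, w ∈ V there is a linear endomorphism whose matrix with respect to 𝒱 is symmetric, agreeing with φ at v and w. Then φ is linear. -/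
/-!
Let `β(x, y) = [x] ⬝ᵥ [y]` be the coordinate dot product of the basis. A linear map with symmetric
matrix is self-adjoint for `β`, so each local implementation `T` of `φ` at `v, w` gives
`β(φ v, w) = β(T v, w) = β(v, T w) = β(v, φ w)`: the map `φ` is self-adjoint for `β`. Since `β` is
nondegenerate, `β(φ (x + y), z) = β(x + y, φ z) = β(φ x + φ y, z)` for all `z` forces additivity,
and homogeneity follows in the same way.
-/

namespace LinearMap

variable {R M P : Type*} [CommRing R] [AddCommGroup M] [Module R M] [AddCommGroup P] [Module R P]

theorem IsAdjointPair.isLinearMap {B : M →ₗ[R] M →ₗ[R] P} (hB : B.SeparatingLeft)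
    {f g : M → M} (hfg : IsAdjointPair B B f g) : IsLinearMap R f := by
  have hinj : Function.Injective B := by
    rw [← ker_eq_bot, ← separatingLeft_iff_ker_eq_bot]
    exact hB
  refine ⟨fun x y ↦ hinj ?_, fun c x ↦ hinj ?_⟩ <;> ext z
  · rw [hfg, map_add, map_add, add_apply, add_apply, hfg, hfg]
  · rw [hfg, map_smul, map_smul, smul_apply, smul_apply, hfg]

theorem isAdjointPair_self_of_two_local {B : M →ₗ[R] M →ₗ[R] P} {φ : M → M}
    (h : ∀ v w, ∃ T : M → M, IsAdjointPair B B T T ∧ T v = φ v ∧ T w = φ w) :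
    IsAdjointPair B B φ φ := fun v w ↦ by
  obtain ⟨T, hT, hv, hw⟩ := h v w
  rw [← hv, ← hw, hT]

variable {ι : Type*} [Fintype ι] [DecidableEq ι]

theorem isAdjointPair_toLinearMap₂_one_iff (b : Module.Basis ι R M) (f g : M →ₗ[R] M) :
    IsAdjointPair (Matrix.toLinearMap₂ b b (1 : Matrix ι ι R))
      (Matrix.toLinearMap₂ b b (1 : Matrix ι ι R)) f g ↔
      (toMatrix b b f).transpose = toMatrix b b g := by
  conv_lhs => rw [← Matrix.toLin_toMatrix b b f, ← Matrix.toLin_toMatrix b b g]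
  rw [isAdjointPair_toLinearMap₂, Matrix.IsAdjointPair, Matrix.mul_one, Matrix.one_mul]

end LinearMap

theorem Matrix.separatingLeft_toLinearMap₂_one {R M ι : Type*} [CommRing R] [AddCommGroup M]
    [Module R M] [Fintype ι] [DecidableEq ι] (b : Module.Basis ι R M) :
    (Matrix.toLinearMap₂ b b (1 : Matrix ι ι R)).SeparatingLeft :=
  (separatingLeft_toLinearMap₂_iff b b).mpr
    (Nondegenerate.of_det_mem_nonZeroDivisors (by simp [one_mem])).separatingLeft

/-- A 2-local linear map whose local implementations all have symmetric
matrices with respect to a fixed basis is linear. -/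
theorem two_local_symmetric_is_linear
    {F V : Type*} [Field F] [AddCommGroup V] [Module F V] {n : ℕ}
    (b : Module.Basis (Fin n) F V) (φ : V → V)
    (h : ∀ v w : V, ∃ T : V →ₗ[F] V,
      (LinearMap.toMatrix b b T).IsSymm ∧ T v = φ v ∧ T w = φ w) :
    IsLinearMap F φ := by
  set B := Matrix.toLinearMap₂ b b (1 : Matrix (Fin n) (Fin n) F)
  have hφ : LinearMap.IsAdjointPair B B φ φ :=
    LinearMap.isAdjointPair_self_of_two_local fun v w ↦
      let ⟨T, hT, hv, hw⟩ := h v w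
      ⟨T, (LinearMap.isAdjointPair_toLinearMap₂_one_iff b T T).mpr hT, hv, hw⟩
  exact hφ.isLinearMap (Matrix.separatingLeft_toLinearMap₂_one b)
end
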